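/- Let (W,w) be a fusion frame for H. Then the set {A ∈ 𝔏_{T*_{W,w}} : max_{1≤i≤m} ‖A M_i T*_{W,w}‖_F = min_{B ∈ 𝔏_{T*_{W,w}}} max_{1≤i≤m} ‖B M_i T*_{W,w}‖_F} is a non-empty, compact and convex subset of L(𝒲,H). -/

import Mathlib

noncomputable section

open scoped InnerProductSpace

variable {𝕜 : Type} [RCLike 𝕜]
variable {H : Type} [NormedAddCommGroup H] [InnerProductSpace 𝕜 H] [FiniteDimensional 𝕜 H]
variable {m : ℕ}

/-- The Hilbert space `𝒲 = ⊕ᵢ Wᵢ` of a fusion sequence, with the ℓ² inner product. -/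
abbrev FFSpace (W : Fin m → Submodule 𝕜 H) : Type := PiLp 2 (fun i => ↥(W i))

/-- The synthesis operator `T_{W,w} : 𝒲 → H`, `(fᵢ)ᵢ ↦ Σᵢ wᵢ fᵢ`. -/
def synthOp (W : Fin m → Submodule 𝕜 H) (w : Fin m → ℝ) : FFSpace W →ₗ[𝕜] H where
  toFun f := ∑ i, (w i : 𝕜) • (f i : H)
  map_add' f g := by
    simp [Finset.sum_add_distrib, smul_add]
  map_smul' c f := by
    simp [Finset.smul_sum]
    congr 1; funext i; rw [smul_comm]

/-- The analysis operator `T*_{W,w} : H → 𝒲`, `f ↦ (wᵢ π_{Wᵢ} f)ᵢ`. -/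
def analysisOp (W : Fin m → Submodule 𝕜 H) (w : Fin m → ℝ) : H →ₗ[𝕜] FFSpace W where
  toFun f := WithLp.toLp 2 (fun i => (w i : 𝕜) • ((W i).orthogonalProjection f))
  map_add' f g := by
    ext i; simp [smul_add]
  map_smul' c f := by
    ext i; simp; rw [smul_comm]

/-- The coordinate operator `M_{J,W} : 𝒲 → 𝒲`, keeping the coordinates in `J`. -/
def MJ (W : Fin m → Submodule 𝕜 H) (J : Finset (Fin m)) : FFSpace W →ₗ[𝕜] FFSpace W where
  toFun f := WithLp.toLp 2 (fun j => if j ∈ J then f j else 0)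
  map_add' f g := by
    ext j; by_cases h : j ∈ J <;> simp [h]
  map_smul' c f := by
    ext j; by_cases h : j ∈ J <;> simp [h]

/-- `Q : 𝒲 → 𝒱` is block-diagonal if `Q M_{j,W} 𝒲 ⊆ M_{j,V} 𝒱` for all `j`. -/
def IsBlockDiagonal (W V : Fin m → Submodule 𝕜 H) (Q : FFSpace W →ₗ[𝕜] FFSpace V) : Prop :=
  ∀ j, LinearMap.range (Q ∘ₗ MJ W {j}) ≤ LinearMap.range (MJ V {j})

/-- `Q : 𝒲 → 𝒱` is component preserving if `Q M_{j,W} 𝒲 = M_{j,V} 𝒱` for all `j`. -/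
def IsComponentPreserving (W V : Fin m → Submodule 𝕜 H) (Q : FFSpace W →ₗ[𝕜] FFSpace V) : Prop :=
  ∀ j, LinearMap.range (Q ∘ₗ MJ W {j}) = LinearMap.range (MJ V {j})

/-- The orthogonal projection onto `U` as an endomorphism of `H`. -/
def projL (U : Submodule 𝕜 H) : H →ₗ[𝕜] H :=
  U.subtype ∘ₗ (U.orthogonalProjection : H →L[𝕜] U).toLinearMap

/-- The squared Frobenius norm `‖B‖_F² = tr(B*B)` of a linear map between
finite-dimensional inner product spaces. -/
def frobSq {𝕜 : Type} [RCLike 𝕜] {E F : Type} [NormedAddCommGroup E] [InnerProductSpace 𝕜 E]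
    [FiniteDimensional 𝕜 E] [NormedAddCommGroup F] [InnerProductSpace 𝕜 F]
    [FiniteDimensional 𝕜 F] (B : E →ₗ[𝕜] F) : ℝ :=
  RCLike.re (LinearMap.trace 𝕜 E (LinearMap.adjoint B ∘ₗ B))

/-- The worst-case one-erasure error `max_i ‖A Mᵢ T*_{W,w}‖_F` of a reconstruction
operator `A : 𝒲 → H`. -/
def maxErr (W : Fin m → Submodule 𝕜 H) (w : Fin m → ℝ) (A : FFSpace W →L[𝕜] H) : ℝ :=
  ⨆ i : Fin m, Real.sqrt (frobSq ((A : FFSpace W →ₗ[𝕜] H) ∘ₗ MJ W {i} ∘ₗ analysisOp W w))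

/-- The set of left inverses of `T*_{W,w}` minimizing the worst-case one-erasure error. -/
def optimalSet (W : Fin m → Submodule 𝕜 H) (w : Fin m → ℝ) : Set (FFSpace W →L[𝕜] H) :=
  {A | A ∘L LinearMap.toContinuousLinearMap (analysisOp W w) = ContinuousLinearMap.id 𝕜 H ∧
    maxErr W w A =
      ⨅ B : {B : FFSpace W →L[𝕜] H //
          B ∘L LinearMap.toContinuousLinearMap (analysisOp W w) = ContinuousLinearMap.id 𝕜 H},
        maxErr W w ↑B}

/-! The error `A ↦ maxᵢ ‖A Mᵢ T*‖_F` is a seminorm on `L(𝒲, H)`, being a maximum of Frobenius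
seminorms, so it is continuous and convex; the left inverses of `T*` form a closed affine
subspace. Since `Σᵢ Mᵢ = id` and `Mᵢ T*` sends `wᵢ⁻¹ fᵢ` to `Mᵢ f`, the operator norm of `A` is at
most `(Σᵢ wᵢ⁻¹)` times its error. The error is therefore coercive: it attains its infimum over
the left inverses, and the minimizers form a closed, bounded, convex set. -/

theorem continuous_ciSup_of_finite {ι X L : Type*} [Finite ι] [TopologicalSpace X]
    [ConditionallyCompleteLattice L] [TopologicalSpace L] [ContinuousSup L]
    {f : ι → X → L} (hf : ∀ i, Continuous (f i)) : Continuous fun x => ⨆ i, f i x := by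
  cases isEmpty_or_nonempty ι
  · simpa only [iSup_of_empty'] using continuous_const
  · have := Fintype.ofFinite ι
    simp_rw [← Finset.sup'_univ_eq_ciSup]
    exact Continuous.finset_sup'_apply Finset.univ_nonempty fun i _ => hf i

def minimizers {V : Type*} (S : Set V) (f : V → ℝ) : Set V :=
  {x ∈ S | f x = ⨅ y : S, f y}

section Minimizers

variable {V : Type*} [NormedAddCommGroup V] [ProperSpace V] {S : Set V} {f : V → ℝ} {C : ℝ}

theorem minimizers_nonempty (hS : IsClosed S) (hne : S.Nonempty) (hf : Continuous f)
    (hC : 0 ≤ C) (hcoer : ∀ x, ‖x‖ ≤ C * f x) :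
    (minimizers S f).Nonempty := by
  obtain ⟨x₀, hx₀⟩ := hne
  have hfar : ∀ᶠ x in Filter.cocompact V, f x₀ ≤ f x := by
    filter_upwards [(isCompact_closedBall (0 : V) (C * f x₀)).compl_mem_cocompact] with x hx
    rw [Set.mem_compl_iff, mem_closedBall_zero_iff, not_le] at hx
    by_contra! h
    nlinarith [hcoer x]
  obtain ⟨x, hxS, hmin⟩ :=
    hf.continuousOn.exists_isMinOn' hS hx₀ (hfar.filter_mono inf_le_left)
  have : Nonempty S := ⟨⟨x, hxS⟩⟩
  have hbdd : BddBelow (Set.range fun y : S => f y) :=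
    ⟨f x, Set.forall_mem_range.2 fun y => hmin y.2⟩
  exact ⟨x, hxS, le_antisymm (le_ciInf fun y => hmin y.2) (ciInf_le hbdd ⟨x, hxS⟩)⟩

theorem isCompact_minimizers (hS : IsClosed S) (hf : Continuous f)
    (hcoer : ∀ x, ‖x‖ ≤ C * f x) : IsCompact (minimizers S f) :=
  Metric.isCompact_of_isClosed_isBounded (hS.inter (isClosed_eq hf continuous_const))
    (isBounded_iff_forall_norm_le.2 ⟨C * ⨅ y : S, f y, fun x hx => hx.2 ▸ hcoer x⟩)

end Minimizers

theorem Seminorm.smul_add_smul_mem_minimizers {V : Type*} [AddCommGroup V] [Module 𝕜 V]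
    (p : Seminorm 𝕜 V) {S : Set V}
    (hS : ∀ x ∈ S, ∀ y ∈ S, ∀ t : ℝ, 0 ≤ t → t ≤ 1 → (t : 𝕜) • x + ((1 - t : ℝ) : 𝕜) • y ∈ S) :
    ∀ x ∈ minimizers S p, ∀ y ∈ minimizers S p, ∀ t : ℝ, 0 ≤ t → t ≤ 1 →
      (t : 𝕜) • x + ((1 - t : ℝ) : 𝕜) • y ∈ minimizers S p := by
  intro x hx y hy t ht0 ht1
  have hz := hS x hx.1 y hy.1 t ht0 ht1
  have hbdd : BddBelow (Set.range fun z : S => p z) :=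
    ⟨0, Set.forall_mem_range.2 fun z => apply_nonneg p (z : V)⟩
  refine ⟨hz, le_antisymm ?_ (ciInf_le hbdd ⟨_, hz⟩)⟩
  calc p ((t : 𝕜) • x + ((1 - t : ℝ) : 𝕜) • y)
      ≤ p ((t : 𝕜) • x) + p (((1 - t : ℝ) : 𝕜) • y) := map_add_le_add p _ _
    _ = t * p x + (1 - t) * p y := by
      rw [map_smul_eq_mul, map_smul_eq_mul, RCLike.norm_ofReal, RCLike.norm_ofReal,
        abs_of_nonneg ht0, abs_of_nonneg (sub_nonneg.2 ht1)]
    _ = ⨅ z : S, p z := by rw [hx.2, hy.2]; ring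

section Frobenius

variable {E F : Type} [NormedAddCommGroup E] [InnerProductSpace 𝕜 E] [FiniteDimensional 𝕜 E]
  [NormedAddCommGroup F] [InnerProductSpace 𝕜 F] [FiniteDimensional 𝕜 F]

theorem frobSq_eq_sum_norm_sq {ι : Type*} [Fintype ι] (b : OrthonormalBasis ι 𝕜 E)
    (B : E →ₗ[𝕜] F) : frobSq B = ∑ j, ‖B (b j)‖ ^ 2 := by
  simp only [frobSq, LinearMap.trace_eq_sum_inner _ b, map_sum, LinearMap.comp_apply,
    LinearMap.adjoint_inner_right, inner_self_eq_norm_sq]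

def frobCoords : (E →ₗ[𝕜] F) →ₗ[𝕜] PiLp 2 (fun _ : Fin (Module.finrank 𝕜 E) => F) :=
  (WithLp.linearEquiv 2 𝕜 _).symm.toLinearMap ∘ₗ
    LinearMap.pi fun j => LinearMap.applyₗ (stdOrthonormalBasis 𝕜 E j)

def frobSeminorm : Seminorm 𝕜 (E →ₗ[𝕜] F) :=
  (normSeminorm 𝕜 _).comp frobCoords

theorem frobSeminorm_apply (B : E →ₗ[𝕜] F) : frobSeminorm B = √(frobSq B) := by
  simp [frobSeminorm, frobCoords, PiLp.norm_eq_of_L2,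
    frobSq_eq_sum_norm_sq (stdOrthonormalBasis 𝕜 E)]

theorem norm_apply_le_frobSeminorm_mul_norm (B : E →ₗ[𝕜] F) (x : E) :
    ‖B x‖ ≤ frobSeminorm B * ‖x‖ := by
  set b := stdOrthonormalBasis 𝕜 E
  calc ‖B x‖ = ‖∑ j, b.repr x j • B (b j)‖ := by
        conv_lhs => rw [← b.sum_repr x, map_sum]
        simp only [map_smul]
    _ ≤ ∑ j, ‖b.repr x j‖ * ‖B (b j)‖ := norm_sum_le_of_le _ fun j _ => (norm_smul _ _).le
    _ ≤ √(∑ j, ‖b.repr x j‖ ^ 2) * √(∑ j, ‖B (b j)‖ ^ 2) := Real.sum_mul_le_sqrt_mul_sqrt _ _ _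
    _ = ‖x‖ * frobSeminorm B := by
        rw [← EuclideanSpace.norm_eq, b.repr.norm_map, frobSeminorm_apply,
          frobSq_eq_sum_norm_sq b]
    _ = frobSeminorm B * ‖x‖ := mul_comm _ _

end Frobenius

theorem sum_MJ_single {H : Type} [NormedAddCommGroup H] [InnerProductSpace 𝕜 H]
    (W : Fin m → Submodule 𝕜 H) (x : FFSpace W) : ∑ i, MJ W {i} x = x := by
  ext j
  simp [MJ, WithLp.ofLp_sum]

section FusionFrame

variable (W : Fin m → Submodule 𝕜 H) (w : Fin m → ℝ)

def errSeminorm : Seminorm 𝕜 (FFSpace W →L[𝕜] H) :=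
  ⨆ i, frobSeminorm.comp
    (LinearMap.lcomp 𝕜 H (MJ W {i} ∘ₗ analysisOp W w) ∘ₗ ContinuousLinearMap.coeLM 𝕜)

theorem coe_errSeminorm : ⇑(errSeminorm W w) = maxErr W w := by
  ext A
  rw [errSeminorm, Seminorm.iSup_apply (Set.finite_range _).bddAbove]
  simp [maxErr, frobSeminorm_apply, LinearMap.lcomp_apply']

theorem maxErr_nonneg (A : FFSpace W →L[𝕜] H) : 0 ≤ maxErr W w A :=
  coe_errSeminorm W w ▸ apply_nonneg _ A

theorem frobSeminorm_comp_le_maxErr (A : FFSpace W →L[𝕜] H) (i : Fin m) :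
    frobSeminorm ((A : FFSpace W →ₗ[𝕜] H) ∘ₗ MJ W {i} ∘ₗ analysisOp W w) ≤ maxErr W w A := by
  rw [frobSeminorm_apply]
  exact le_ciSup
    (f := fun i => √(frobSq ((A : FFSpace W →ₗ[𝕜] H) ∘ₗ MJ W {i} ∘ₗ analysisOp W w)))
    (Set.finite_range _).bddAbove i

theorem continuous_maxErr : Continuous (maxErr W w) := by
  refine continuous_ciSup_of_finite fun i => ?_
  simp_rw [← frobSeminorm_apply]
  exact (LinearMap.continuous_of_finiteDimensional (frobCoords ∘ₗ
    LinearMap.lcomp 𝕜 H (MJ W {i} ∘ₗ analysisOp W w) ∘ₗ ContinuousLinearMap.coeLM 𝕜)).norm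

/-- The set `𝔏_{T*_{W,w}}` of left inverses of the analysis operator. -/
def leftInverses : Set (FFSpace W →L[𝕜] H) :=
  {A | A ∘L LinearMap.toContinuousLinearMap (analysisOp W w) = ContinuousLinearMap.id 𝕜 H}

theorem isClosed_leftInverses : IsClosed (leftInverses W w) :=
  isClosed_eq (continuous_id.clm_comp continuous_const) continuous_const

theorem optimalSet_eq_minimizers : optimalSet W w = minimizers (leftInverses W w) (maxErr W w) :=
  rfl

variable {W w}

theorem MJ_single_analysisOp_inv_smul {i : Fin m} (hwi : w i ≠ 0) (x : FFSpace W) :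
    MJ W {i} (analysisOp W w ((w i : 𝕜)⁻¹ • (x i : H))) = MJ W {i} x := by
  ext j : 2
  simp only [MJ, analysisOp, LinearMap.coe_mk, AddHom.coe_mk, Finset.mem_singleton]
  split_ifs with hj
  · subst hj
    rw [map_smul, smul_smul, mul_inv_cancel₀ (by exact_mod_cast hwi), one_smul,
      Submodule.orthogonalProjectionOnto_mem_subspace_eq_self]
  · rfl

theorem norm_le_sum_inv_mul_maxErr (hw : ∀ i, 0 < w i) (A : FFSpace W →L[𝕜] H) :
    ‖A‖ ≤ (∑ i, (w i)⁻¹) * maxErr W w A := by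
  have hC : 0 ≤ ∑ i, (w i)⁻¹ := Finset.sum_nonneg fun i _ => inv_nonneg.2 (hw i).le
  refine A.opNorm_le_bound (mul_nonneg hC (maxErr_nonneg W w A)) fun x => ?_
  have hterm : ∀ i, ‖A (MJ W {i} x)‖ ≤ (w i)⁻¹ * (maxErr W w A * ‖x‖) := fun i => by
    set y : H := (w i : 𝕜)⁻¹ • (x i : H)
    have hy : ‖y‖ ≤ (w i)⁻¹ * ‖x‖ := by
      rw [norm_smul, norm_inv, RCLike.norm_ofReal, abs_of_pos (hw i)]
      exact mul_le_mul_of_nonneg_left (PiLp.norm_apply_le x i) (inv_nonneg.2 (hw i).le)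
    have hA := norm_apply_le_frobSeminorm_mul_norm
      ((A : FFSpace W →ₗ[𝕜] H) ∘ₗ MJ W {i} ∘ₗ analysisOp W w) y
    rw [LinearMap.comp_apply, LinearMap.comp_apply, ContinuousLinearMap.coe_coe,
      MJ_single_analysisOp_inv_smul (hw i).ne'] at hA
    calc ‖A (MJ W {i} x)‖
        ≤ frobSeminorm ((A : FFSpace W →ₗ[𝕜] H) ∘ₗ MJ W {i} ∘ₗ analysisOp W w) * ‖y‖ := hA
      _ ≤ maxErr W w A * ((w i)⁻¹ * ‖x‖) :=
        mul_le_mul (frobSeminorm_comp_le_maxErr W w A i) hy (norm_nonneg _) (maxErr_nonneg W w A)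
      _ = (w i)⁻¹ * (maxErr W w A * ‖x‖) := by ring
  calc ‖A x‖ = ‖∑ i, A (MJ W {i} x)‖ := by rw [← map_sum, sum_MJ_single]
    _ ≤ ∑ i, (w i)⁻¹ * (maxErr W w A * ‖x‖) := norm_sum_le_of_le _ fun i _ => hterm i
    _ = (∑ i, (w i)⁻¹) * maxErr W w A * ‖x‖ := by rw [← Finset.sum_mul, mul_assoc]

theorem analysisOp_injective (hw : ∀ i, w i ≠ 0) (hW : ⨆ i, W i = ⊤) :
    Function.Injective (analysisOp W w) := by
  refine (injective_iff_map_eq_zero _).2 fun f hf => ?_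
  have hperp : ∀ i, f ∈ (W i)ᗮ := fun i => by
    have hi : (w i : 𝕜) • (W i).orthogonalProjectionOnto f = 0 :=
      congrArg (fun z : FFSpace W => z i) hf
    rw [smul_eq_zero, RCLike.ofReal_eq_zero] at hi
    exact Submodule.orthogonalProjectionOnto_eq_zero_iff.1 (hi.resolve_left (hw i))
  have : f ∈ (⨆ i, W i)ᗮ := Submodule.iInf_orthogonal W ▸ Submodule.mem_iInf _ |>.2 hperp
  simpa [hW] using this

theorem smul_add_smul_mem_leftInverses {A B : FFSpace W →L[𝕜] H} (hA : A ∈ leftInverses W w)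
    (hB : B ∈ leftInverses W w) {a b : 𝕜} (hab : a + b = 1) :
    a • A + b • B ∈ leftInverses W w := by
  simp only [leftInverses, Set.mem_ofPred_eq, ContinuousLinearMap.add_comp,
    ContinuousLinearMap.smul_comp] at hA hB ⊢
  rw [hA, hB, ← add_smul, hab, one_smul]

theorem leftInverses_nonempty (hw : ∀ i, w i ≠ 0) (hW : ⨆ i, W i = ⊤) :
    (leftInverses W w).Nonempty := by
  obtain ⟨g, hg⟩ := (analysisOp W w).exists_leftInverse_of_injective
    (LinearMap.ker_eq_bot.2 (analysisOp_injective hw hW))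
  exact ⟨LinearMap.toContinuousLinearMap g, ContinuousLinearMap.coe_injective hg⟩

end FusionFrame

/-- for a fusion frame `(W,w)`, the set of left inverses of `T*_{W,w}`
minimizing the worst-case one-erasure error is non-empty, compact and convex
(convexity for real coefficients, acting through `𝕜`). -/
theorem optimalSet_nonempty_compact_convex
    {𝕜 : Type} [RCLike 𝕜] {H : Type} [NormedAddCommGroup H] [InnerProductSpace 𝕜 H]
    [FiniteDimensional 𝕜 H] {m : ℕ}
    (W : Fin m → Submodule 𝕜 H) (w : Fin m → ℝ) (hw : ∀ i, 0 < w i) (hW : ⨆ i, W i = ⊤) :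
    (optimalSet W w).Nonempty ∧ IsCompact (optimalSet W w) ∧
    (∀ A ∈ optimalSet W w, ∀ B ∈ optimalSet W w, ∀ t : ℝ, 0 ≤ t → t ≤ 1 →
      ((t : 𝕜) • A + ((1 - t : ℝ) : 𝕜) • B) ∈ optimalSet W w) := by
  have : ProperSpace (FFSpace W →L[𝕜] H) := FiniteDimensional.proper 𝕜 (FFSpace W →L[𝕜] H)
  have hS := isClosed_leftInverses W w
  have hcoer := norm_le_sum_inv_mul_maxErr (W := W) hw
  have hC : 0 ≤ ∑ i, (w i)⁻¹ := Finset.sum_nonneg fun i _ => inv_nonneg.2 (hw i).le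
  rw [optimalSet_eq_minimizers]
  refine ⟨?_, ?_, ?_⟩
  · exact minimizers_nonempty hS (leftInverses_nonempty (fun i => (hw i).ne') hW)
      (continuous_maxErr W w) hC hcoer
  · exact isCompact_minimizers (V := FFSpace W →L[𝕜] H) hS (continuous_maxErr W w) hcoer
  · rw [← coe_errSeminorm]
    exact (errSeminorm W w).smul_add_smul_mem_minimizers fun A hA B hB t _ _ =>
      smul_add_smul_mem_leftInverses hA hB (by push_cast; ring)
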